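/- Let V : [0,∞) → [0,∞) and ζ : [0,∞) → [0,∞) be continuously differentiable functions, let ψ : [0,∞) → [ψ̲, ψ̄] be a function whose values lie in an interval [ψ̲, ψ̄] with ψ̲·ψ̄ > 0, let ι be a real constant, and let ħ be a B-type Nussbaum function. If for all t ≥ 0 one has V′(t) ≤ (ψ(t)·ħ(ζ(t)) + ι)·ζ′(t) and ζ′(t) ≥ 0, then both V and ζ are bounded on [0,∞). -/

import Mathlib

/-!
With `G(z) = ψ̄ ∫₀^z ħ⁺ - ψ̲ ∫₀^z ħ⁻ + ι z`, the hypotheses give `ψ ħ(ζ) + ι ≤ G'(ζ)`, so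
`V - G ∘ ζ` is nonincreasing and `0 ≤ V(t) ≤ V(0) - G(ζ(0)) + G(ζ(t))`. If `ζ` were unbounded,
it would sweep out a whole half-line, so `G` would be bounded below near `+∞`. Since
`ψ̲ψ̄ > 0`, both bounds have the same sign; if they are positive this says
`ψ̲ ∫₀^z ħ⁻ ≤ ψ̄ ∫₀^z ħ⁺ + O(z)`, which the superlinear growth of `∫₀^z ħ⁺` and
`limsup (∫₀^z ħ⁻)/(∫₀^z ħ⁺) = ∞` forbid (symmetrically if they are negative). Hence `ζ` is
bounded, and then so is `V`, by continuity of `G` on a compact interval.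
-/

open Filter

/-- The positive part `ħ⁺(ζ) = max {0, ħ(ζ)}`. -/
noncomputable def nussPos (h : ℝ → ℝ) (ζ : ℝ) : ℝ := max 0 (h ζ)

/-- The negative part `ħ⁻(ζ) = max {0, −ħ(ζ)}`. -/
noncomputable def nussNeg (h : ℝ → ℝ) (ζ : ℝ) : ℝ := max 0 (-h ζ)

/-- A continuously differentiable function `ħ : [0,∞) → ℝ` is a *B-type Nussbaum
function* if `lim_{ζ→∞} (1/ζ)∫₀^ζ ħ⁺ = ∞`, `lim_{ζ→∞} (1/ζ)∫₀^ζ ħ⁻ = ∞`,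
`limsup_{ζ→∞} (∫₀^ζ ħ⁺)/(∫₀^ζ ħ⁻) = ∞` and `limsup_{ζ→∞} (∫₀^ζ ħ⁻)/(∫₀^ζ ħ⁺) = ∞`
(the limsups are taken in the extended reals so that `= ∞` is meaningful). -/
def IsBNussbaum (h : ℝ → ℝ) : Prop :=
  ContDiff ℝ 1 h ∧
  Tendsto (fun ζ => (∫ τ in (0:ℝ)..ζ, nussPos h τ) / ζ) atTop atTop ∧
  Tendsto (fun ζ => (∫ τ in (0:ℝ)..ζ, nussNeg h τ) / ζ) atTop atTop ∧
  limsup (fun ζ =>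
      (((∫ τ in (0:ℝ)..ζ, nussPos h τ) / (∫ τ in (0:ℝ)..ζ, nussNeg h τ) : ℝ) : EReal)) atTop = ⊤ ∧
  limsup (fun ζ =>
      (((∫ τ in (0:ℝ)..ζ, nussNeg h τ) / (∫ τ in (0:ℝ)..ζ, nussPos h τ) : ℝ) : EReal)) atTop = ⊤

theorem sub_comp_le_of_deriv_le {V ζ G g : ℝ → ℝ} (hV : Differentiable ℝ V)
    (hζ : Differentiable ℝ ζ) (hG : ∀ z, HasDerivAt G (g z) z)
    (hle : ∀ t, 0 ≤ t → deriv V t ≤ g (ζ t) * deriv ζ t) {t : ℝ} (ht : 0 ≤ t) :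
    V t - G (ζ t) ≤ V 0 - G (ζ 0) := by
  have hW : ∀ s, HasDerivAt (fun s => V s - G (ζ s)) (deriv V s - g (ζ s) * deriv ζ s) s :=
    fun s => (hV s).hasDerivAt.sub ((hG (ζ s)).comp s (hζ s).hasDerivAt)
  have hanti : AntitoneOn (fun s => V s - G (ζ s)) (Set.Ici 0) :=
    antitoneOn_of_hasDerivWithinAt_nonpos (convex_Ici 0)
      (fun s _ => (hW s).continuousAt.continuousWithinAt) (fun s _ => (hW s).hasDerivWithinAt)
      (fun s hs => sub_nonpos.2 (hle s (interior_Ici.subset hs).le))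
  exact hanti Set.self_mem_Ici ht ht

theorem mul_le_nussPos_sub_nussNeg (h : ℝ → ℝ) {p a b : ℝ} (hp : p ∈ Set.Icc a b) (x : ℝ) :
    p * h x ≤ b * nussPos h x - a * nussNeg h x := by
  rcases le_total 0 (h x) with hx | hx
  · simp only [nussPos, nussNeg, max_eq_right hx, max_eq_left (neg_nonpos.2 hx)]
    nlinarith [hp.2]
  · simp only [nussPos, nussNeg, max_eq_left hx, max_eq_right (neg_nonneg.2 hx)]
    nlinarith [hp.1]

noncomputable def nussMajorant (h : ℝ → ℝ) (a b ι z : ℝ) : ℝ :=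
  b * (∫ τ in (0:ℝ)..z, nussPos h τ) - a * (∫ τ in (0:ℝ)..z, nussNeg h τ) + ι * z

theorem hasDerivAt_nussMajorant {h : ℝ → ℝ} (hh : Continuous h) (a b ι z : ℝ) :
    HasDerivAt (nussMajorant h a b ι) (b * nussPos h z - a * nussNeg h z + ι) z := by
  have hpos := ((continuous_const.max hh : Continuous (nussPos h)).integral_hasStrictDerivAt
    0 z).hasDerivAt
  have hneg := ((continuous_const.max hh.neg : Continuous (nussNeg h)).integral_hasStrictDerivAt
    0 z).hasDerivAt
  have hlin := ((hasDerivAt_id z).const_mul ι).congr_deriv (mul_one ι)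
  exact ((hpos.const_mul b).sub (hneg.const_mul a)).add hlin

theorem eventually_lt_of_tendsto_div_atTop {f : ℝ → ℝ}
    (hf : Tendsto (fun z => f z / z) atTop atTop) (c d : ℝ) :
    ∀ᶠ z in atTop, c * z + d < f z := by
  filter_upwards [hf.eventually_gt_atTop (|c| + |d|), eventually_ge_atTop 1] with z hfz hz
  rw [lt_div_iff₀ (by linarith)] at hfz
  nlinarith [le_abs_self c, le_abs_self d, abs_nonneg d]

theorem not_eventually_mul_le_of_limsup_div_eq_top {H₁ H₂ : ℝ → ℝ} {a : ℝ} (ha : 0 < a)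
    (h₂ : Tendsto (fun z => H₂ z / z) atTop atTop)
    (hls : limsup (fun z => ((H₁ z / H₂ z : ℝ) : EReal)) atTop = ⊤) (b c d : ℝ) :
    ¬ ∀ᶠ z in atTop, a * H₁ z ≤ b * H₂ z + c * z + d := by
  intro hle
  have hbdd : ∀ᶠ z in atTop, ((H₁ z / H₂ z : ℝ) : EReal) ≤ (((|b| + 1) / a : ℝ) : EReal) := by
    filter_upwards [hle, eventually_lt_of_tendsto_div_atTop h₂ 0 0,
      eventually_lt_of_tendsto_div_atTop h₂ c d] with z hz hpos hlin
    replace hpos : 0 < H₂ z := by simpa using hpos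
    rw [EReal.coe_le_coe_iff, div_le_div_iff₀ hpos ha]
    nlinarith [mul_nonneg (sub_nonneg.2 (le_abs_self b)) hpos.le]
  have := limsup_le_of_le (h := hbdd)
  rw [hls] at this
  exact (EReal.coe_lt_top _).not_ge this

theorem not_eventually_le_nussMajorant {h : ℝ → ℝ} (hN : IsBNussbaum h) {a b : ℝ}
    (hab : 0 < a * b) (ι K : ℝ) : ¬ ∀ᶠ z in atTop, K ≤ nussMajorant h a b ι z := by
  obtain ⟨-, hpos, hneg, hlsPos, hlsNeg⟩ := hN
  intro hK
  rcases pos_and_pos_or_neg_and_neg_of_mul_pos hab with ⟨ha, -⟩ | ⟨-, hb⟩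
  · exact not_eventually_mul_le_of_limsup_div_eq_top ha hpos hlsNeg b ι (-K)
      (hK.mono fun z hz => by unfold nussMajorant at hz; linarith)
  · exact not_eventually_mul_le_of_limsup_div_eq_top (neg_pos.2 hb) hneg hlsPos (-a) ι (-K)
      (hK.mono fun z hz => by unfold nussMajorant at hz; linarith)

theorem eventually_le_of_le_comp_of_unbounded {ζ G : ℝ → ℝ} {K : ℝ} (hζ : Continuous ζ)
    (hunb : ∀ C, ∃ t, 0 ≤ t ∧ C < ζ t) (hK : ∀ t, 0 ≤ t → K ≤ G (ζ t)) :
    ∀ᶠ z in atTop, K ≤ G z := by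
  filter_upwards [eventually_ge_atTop (ζ 0)] with z hz
  obtain ⟨t, ht, hzt⟩ := hunb z
  obtain ⟨s, hs, rfl⟩ := intermediate_value_Icc ht hζ.continuousOn ⟨hz, hzt.le⟩
  exact hK s hs.1

/-- Lemma 1 of the paper for `L = ∞`, after Chen 2019.
Let `V, ζ : [0,∞) → [0,∞)` be continuously differentiable, let
`ψ : [0,∞) → [ψ̲, ψ̄]` with `ψ̲·ψ̄ > 0`, let `ι ∈ ℝ`, and let `ħ` be a B-type
Nussbaum function.  If `V′(t) ≤ (ψ(t)·ħ(ζ(t)) + ι)·ζ′(t)` and `ζ′(t) ≥ 0` for all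
`t ≥ 0`, then `V` and `ζ` are bounded on `[0,∞)`. -/
theorem b_nussbaum_lemma
    (V ζ ψ h : ℝ → ℝ) (ψlo ψhi ι : ℝ)
    (hV_smooth : ContDiff ℝ 1 V) (hζ_smooth : ContDiff ℝ 1 ζ)
    (hV_nonneg : ∀ t, 0 ≤ t → 0 ≤ V t)
    (hζ_nonneg : ∀ t, 0 ≤ t → 0 ≤ ζ t)
    (hψ : ∀ t, 0 ≤ t → ψ t ∈ Set.Icc ψlo ψhi)
    (hψprod : 0 < ψlo * ψhi)
    (hNuss : IsBNussbaum h)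
    (hineq : ∀ t, 0 ≤ t → deriv V t ≤ (ψ t * h (ζ t) + ι) * deriv ζ t)
    (hζ_mono : ∀ t, 0 ≤ t → 0 ≤ deriv ζ t) :
    (∃ C : ℝ, ∀ t, 0 ≤ t → V t ≤ C) ∧ (∃ C : ℝ, ∀ t, 0 ≤ t → ζ t ≤ C) := by
  set G := nussMajorant h ψlo ψhi ι
  have hG := hasDerivAt_nussMajorant hNuss.1.continuous ψlo ψhi ι
  have hderiv : ∀ s, 0 ≤ s →
      deriv V s ≤ (ψhi * nussPos h (ζ s) - ψlo * nussNeg h (ζ s) + ι) * deriv ζ s :=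
    fun s hs => (hineq s hs).trans (mul_le_mul_of_nonneg_right
      (by linarith [mul_le_nussPos_sub_nussNeg h (hψ s hs) (ζ s)]) (hζ_mono s hs))
  have hV_le : ∀ t, 0 ≤ t → V t ≤ V 0 - G (ζ 0) + G (ζ t) := fun t ht => by
    linarith [sub_comp_le_of_deriv_le (hV_smooth.differentiable one_ne_zero)
      (hζ_smooth.differentiable one_ne_zero) hG hderiv ht]
  obtain ⟨C, hC⟩ : ∃ C, ∀ t, 0 ≤ t → ζ t ≤ C := by
    by_contra! hunb
    exact not_eventually_le_nussMajorant hNuss hψprod ι (G (ζ 0) - V 0)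
      (eventually_le_of_le_comp_of_unbounded hζ_smooth.continuous hunb
        fun t ht => by linarith [hV_le t ht, hV_nonneg t ht])
  obtain ⟨M, hM⟩ := (isCompact_Icc (a := 0) (b := C)).bddAbove_image
    (continuous_iff_continuousAt.2 fun z => (hG z).continuousAt).continuousOn
  refine ⟨⟨V 0 - G (ζ 0) + M, fun t ht => (hV_le t ht).trans ?_⟩, ⟨C, hC⟩⟩
  gcongr
  exact hM ⟨ζ t, ⟨hζ_nonneg t ht, hC t ht⟩, rfl⟩
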